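/- Let $X,Y$ be Banach spaces, $F : X \rightrightarrows Y$ a closed convex set-valued mapping, $A \subseteq X$ closed convex, $\bar y \in Y$, $S := F^{-1}(\bar y) \cap A$, $x \in S$, and $\tau > 0$. Suppose the strong BCQ holds: $N(S,x) \cap B_{X^*} \subseteq \tau(D^*F(x,\bar y)(B_{Y^*}) + N(A,x) \cap B_{X^*})$. Then for all $\eta_1, \eta_2 \geq 0$ with $\tau(\eta_1 + \eta_2) < 1$: $DF^{-1}(\bar y, x)(\eta_1 B_Y) \cap (T(A,x) + \eta_2 B_X) \subseteq \overline{T(S,x) + B_X}$. -/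
import Mathlib


open Set Metric Filter Topology Pointwise

noncomputable section

/-- Contingent cone of a convex set: closure of ⋃_{t>0} (A - a)/t. -/
def contCone {X : Type*} [NormedAddCommGroup X] [NormedSpace ℝ X] (A : Set X) (a : X) : Set X :=
  closure {v : X | ∃ t : ℝ, 0 < t ∧ a + t • v ∈ A}

/-- Normal cone of a convex set, as a set of continuous linear functionals. -/
def nCone {X : Type*} [NormedAddCommGroup X] [NormedSpace ℝ X] (A : Set X) (a : X) :
    Set (X →L[ℝ] ℝ) :=
  {f | ∀ u ∈ A, f (u - a) ≤ 0}

section aux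

variable {X : Type*} [NormedAddCommGroup X] [NormedSpace ℝ X]

lemma preCone_convex {A : Set X} (hA : Convex ℝ A) (a : X) :
    Convex ℝ {v : X | ∃ t : ℝ, 0 < t ∧ a + t • v ∈ A} := by
  rintro v₁ ⟨t₁, ht₁, hA₁⟩ v₂ ⟨t₂, ht₂, hA₂⟩ lam mu hlam hmu hsum
  have hdpos : 0 < lam / t₁ + mu / t₂ := by
    rcases lt_or_ge 0 lam with h | h
    · exact add_pos_of_pos_of_nonneg (div_pos h ht₁) (div_nonneg hmu ht₂.le)
    · have hlam0 : lam = 0 := le_antisymm h hlam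
      have hmu1 : mu = 1 := by linarith
      rw [hlam0, hmu1]
      simpa using div_pos one_pos ht₂
  set d : ℝ := lam / t₁ + mu / t₂ with hd
  refine ⟨d⁻¹, inv_pos.2 hdpos, ?_⟩
  set θ : ℝ := d⁻¹ * (lam / t₁) with hθ
  set θ' : ℝ := d⁻¹ * (mu / t₂) with hθ'
  have hθnn : 0 ≤ θ := mul_nonneg (inv_pos.2 hdpos).le (div_nonneg hlam ht₁.le)
  have hθ'nn : 0 ≤ θ' := mul_nonneg (inv_pos.2 hdpos).le (div_nonneg hmu ht₂.le)
  have hθsum : θ + θ' = 1 := by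
    rw [hθ, hθ', ← mul_add, ← hd, inv_mul_cancel₀ hdpos.ne']
  have hmem := hA hA₁ hA₂ hθnn hθ'nn hθsum
  have e1 : θ * t₁ = d⁻¹ * lam := by
    rw [hθ]; field_simp
  have e2 : θ' * t₂ = d⁻¹ * mu := by
    rw [hθ']; field_simp
  have key : a + d⁻¹ • (lam • v₁ + mu • v₂) =
      θ • (a + t₁ • v₁) + θ' • (a + t₂ • v₂) := by
    rw [smul_add, smul_add, smul_add, smul_smul, smul_smul, smul_smul, smul_smul,
      e1, e2]
    rw [show θ • a + (d⁻¹ * lam) • v₁ + (θ' • a + (d⁻¹ * mu) • v₂)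
        = (θ • a + θ' • a) + ((d⁻¹ * lam) • v₁ + (d⁻¹ * mu) • v₂) by abel]
    rw [← add_smul, hθsum, one_smul, mul_smul, mul_smul]
  rw [key]; exact hmem

lemma contCone_convex {A : Set X} (hA : Convex ℝ A) (a : X) : Convex ℝ (contCone A a) :=
  (preCone_convex hA a).closure

lemma contCone_nonpos {A : Set X} {a : X} (f : X →L[ℝ] ℝ)
    (h : ∀ v : X, (∃ t : ℝ, 0 < t ∧ a + t • v ∈ A) → f v ≤ 0) :
    ∀ v ∈ contCone A a, f v ≤ 0 := by
  intro v hv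
  have hsub : contCone A a ⊆ {w | f w ≤ 0} :=
    closure_minimal (fun w hw => h w hw) (isClosed_le f.continuous continuous_const)
  exact hsub hv

lemma smul_mem_contCone {A : Set X} {a : X} {s : ℝ} (hs : 0 < s) {v : X}
    (hv : v ∈ contCone A a) : s • v ∈ contCone A a := by
  have hmap : MapsTo (fun w : X => s • w) {v : X | ∃ t : ℝ, 0 < t ∧ a + t • v ∈ A}
      {v : X | ∃ t : ℝ, 0 < t ∧ a + t • v ∈ A} := by
    rintro w ⟨t, ht, hw⟩
    exact ⟨t / s, div_pos ht hs, by rwa [smul_smul, div_mul_cancel₀ _ hs.ne']⟩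
  exact map_mem_closure (continuous_const_smul s) hv hmap

end aux

set_option maxHeartbeats 1000000 in
theorem stmt16 {X Y : Type*} [NormedAddCommGroup X] [NormedSpace ℝ X] [CompleteSpace X]
    [NormedAddCommGroup Y] [NormedSpace ℝ Y] [CompleteSpace Y]
    (F : X → Set Y) (hFcl : IsClosed {p : X × Y | p.2 ∈ F p.1})
    (hFcv : Convex ℝ {p : X × Y | p.2 ∈ F p.1})
    (A : Set X) (hAcl : IsClosed A) (hAcv : Convex ℝ A)
    (ybar : Y) (x : X) (hx : x ∈ {x : X | ybar ∈ F x} ∩ A)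
    (τ : ℝ) (hτ : 0 < τ)
    (hbcq : nCone ({x : X | ybar ∈ F x} ∩ A) x ∩ {f : X →L[ℝ] ℝ | ‖f‖ ≤ 1} ⊆
      τ • ({f : X →L[ℝ] ℝ | ∃ g : Y →L[ℝ] ℝ, ‖g‖ ≤ 1 ∧
              ∀ p ∈ {p : X × Y | p.2 ∈ F p.1}, f (p.1 - x) - g (p.2 - ybar) ≤ 0} +
            nCone A x ∩ {f : X →L[ℝ] ℝ | ‖f‖ ≤ 1})) :
    ∀ η₁ η₂ : ℝ, 0 ≤ η₁ → 0 ≤ η₂ → τ * (η₁ + η₂) < 1 →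
      {u : X | ∃ v ∈ closedBall (0 : Y) η₁,
          (u, v) ∈ contCone {p : X × Y | p.2 ∈ F p.1} (x, ybar)} ∩
        (contCone A x + closedBall (0 : X) η₂) ⊆
      closure (contCone ({x : X | ybar ∈ F x} ∩ A) x + closedBall (0 : X) 1) := by
  intro η₁ η₂ hη₁ hη₂ hτη u hu
  obtain ⟨⟨v, hvmem, huv⟩, hu2⟩ := hu
  by_contra hcon
  set S : Set X := {x : X | ybar ∈ F x} ∩ A with hS
  have hxS : x ∈ S := hx
  have hScv : Convex ℝ S := by
    refine Convex.inter ?_ hAcv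
    intro x₁ hx₁ x₂ hx₂ lam mu hl hm hsum
    have h := hFcv (show ((x₁, ybar) : X × Y) ∈ _ from hx₁)
      (show ((x₂, ybar) : X × Y) ∈ _ from hx₂) hl hm hsum
    have : lam • ((x₁, ybar) : X × Y) + mu • (x₂, ybar)
        = (lam • x₁ + mu • x₂, ybar) := by
      rw [Prod.smul_mk, Prod.smul_mk, Prod.mk_add_mk, ← add_smul, hsum, one_smul]
    rwa [this] at h
  have hCcv : Convex ℝ (closure (contCone S x + closedBall (0 : X) 1)) :=
    ((contCone_convex hScv x).add (convex_closedBall _ _)).closure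
  obtain ⟨f, u₀, hfu₀, hu₀⟩ :=
    geometric_hahn_banach_closed_point hCcv isClosed_closure hcon
  have h0T : (0 : X) ∈ contCone S x :=
    subset_closure ⟨1, one_pos, by simpa using hxS⟩
  have hmemC : ∀ w ∈ contCone S x, ∀ b ∈ closedBall (0 : X) 1,
      w + b ∈ closure (contCone S x + closedBall (0 : X) 1) :=
    fun w hw b hb => subset_closure (add_mem_add hw hb)
  have hu₀pos : 0 < u₀ := by
    have h := hfu₀ _ (hmemC 0 h0T 0 (mem_closedBall_self zero_le_one))
    simpa using h
  have hfT : ∀ w ∈ contCone S x, f w ≤ 0 := by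
    intro w hw
    by_contra hfw
    push_neg at hfw
    set s : ℝ := 2 * u₀ / f w with hsdef
    have hs : 0 < s := by positivity
    have h := hfu₀ _ (hmemC (s • w) (smul_mem_contCone hs hw) 0
      (mem_closedBall_self zero_le_one))
    rw [add_zero, map_smul, smul_eq_mul, hsdef, div_mul_cancel₀ _ hfw.ne'] at h
    linarith
  have hfnorm : ‖f‖ ≤ u₀ := by
    refine f.opNorm_le_bound hu₀pos.le fun z => ?_
    rcases eq_or_ne z 0 with rfl | hz
    · simp
    have hznorm : 0 < ‖z‖ := norm_pos_iff.2 hz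
    have hb : ‖z‖⁻¹ • z ∈ closedBall (0 : X) 1 := by
      rw [mem_closedBall_zero_iff, norm_smul, norm_inv, norm_norm,
        inv_mul_cancel₀ hznorm.ne']
    have hb' : -(‖z‖⁻¹ • z) ∈ closedBall (0 : X) 1 := by
      rwa [mem_closedBall_zero_iff, norm_neg, ← mem_closedBall_zero_iff]
    have h1 := hfu₀ _ (hmemC 0 h0T _ hb)
    have h2 := hfu₀ _ (hmemC 0 h0T _ hb')
    rw [zero_add, map_smul, smul_eq_mul] at h1
    rw [zero_add, map_neg, map_smul, smul_eq_mul] at h2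
    have hz1 : f z < u₀ * ‖z‖ := by
      have h := mul_lt_mul_of_pos_left h1 hznorm
      rwa [← mul_assoc, mul_inv_cancel₀ hznorm.ne', one_mul, mul_comm ‖z‖ u₀] at h
    have hz2 : -(f z) < u₀ * ‖z‖ := by
      have h := mul_lt_mul_of_pos_left h2 hznorm
      rwa [mul_neg, ← mul_assoc, mul_inv_cancel₀ hznorm.ne', one_mul,
        mul_comm ‖z‖ u₀] at h
    rw [Real.norm_eq_abs, abs_le]
    constructor <;> linarith
  have hfne : (0 : ℝ) < ‖f‖ := by
    rcases (norm_nonneg f).lt_or_eq with h | h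
    · exact h
    · exfalso
      have hf0 : f = 0 := by
        rwa [eq_comm, norm_eq_zero] at h
      rw [hf0] at hu₀
      simp at hu₀
      linarith
  set f' : X →L[ℝ] ℝ := ‖f‖⁻¹ • f with hf'def
  have hf'norm : ‖f'‖ ≤ 1 := by
    have h5 : ‖f'‖ = ‖‖f‖⁻¹‖ * ‖f‖ := norm_smul _ f
    rw [h5, norm_inv, norm_norm, inv_mul_cancel₀ hfne.ne']
  have hf'N : f' ∈ nCone S x := by
    intro u' hu'
    have hmem : u' - x ∈ contCone S x :=
      subset_closure ⟨1, one_pos, by simpa using hu'⟩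
    have := hfT _ hmem
    rw [hf'def, ContinuousLinearMap.smul_apply, smul_eq_mul]
    exact mul_nonpos_of_nonneg_of_nonpos (inv_nonneg.2 (norm_nonneg f)) this
  have hf'u : 1 < f' u := by
    have h1 : ‖f‖⁻¹ * ‖f‖ ≤ ‖f‖⁻¹ * u₀ :=
      mul_le_mul_of_nonneg_left hfnorm (inv_nonneg.2 (norm_nonneg f))
    have h2 : ‖f‖⁻¹ * u₀ < ‖f‖⁻¹ * f u :=
      mul_lt_mul_of_pos_left hu₀ (inv_pos.2 hfne)
    rw [hf'def, ContinuousLinearMap.smul_apply, smul_eq_mul]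
    rw [inv_mul_cancel₀ hfne.ne'] at h1
    linarith
  obtain ⟨s, hsmem, hfs⟩ := Set.mem_smul_set.mp (hbcq ⟨hf'N, hf'norm⟩)
  obtain ⟨p, hp, q, hq, hpq⟩ := Set.mem_add.mp hsmem
  obtain ⟨g, hgnorm, hgp⟩ := hp
  obtain ⟨hqN, hqB⟩ := hq
  -- estimate p u ≤ η₁
  have hpu : p u ≤ η₁ := by
    have hclosed : IsClosed {w : X × Y | p w.1 - g w.2 ≤ 0} :=
      isClosed_le ((p.continuous.comp continuous_fst).sub
        (g.continuous.comp continuous_snd)) continuous_const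
    have hsub : contCone {p : X × Y | p.2 ∈ F p.1} ((x, ybar) : X × Y) ⊆
        {w : X × Y | p w.1 - g w.2 ≤ 0} := by
      refine closure_minimal ?_ hclosed
      rintro ⟨u', v'⟩ ⟨t, ht, hmem⟩
      have h1 := hgp _ hmem
      simp only [Prod.smul_mk, Prod.mk_add_mk, Prod.fst, Prod.snd] at h1
      rw [add_sub_cancel_left, add_sub_cancel_left, map_smul, map_smul,
        smul_eq_mul, smul_eq_mul] at h1
      show p u' - g v' ≤ 0
      nlinarith
    have h3 : p u - g v ≤ 0 := hsub huv
    have hgv : g v ≤ η₁ := by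
      have h4 := g.le_opNorm v
      have hv' : ‖v‖ ≤ η₁ := by rwa [mem_closedBall_zero_iff] at hvmem
      calc g v ≤ ‖g‖ * ‖v‖ := le_trans (le_abs_self _) h4
        _ ≤ 1 * η₁ := mul_le_mul hgnorm hv' (norm_nonneg _) zero_le_one
        _ = η₁ := one_mul _
    linarith
  -- estimate q u ≤ η₂
  have hqu : q u ≤ η₂ := by
    obtain ⟨w, hw, b, hb, hwb⟩ := Set.mem_add.mp hu2
    have hqw : q w ≤ 0 := by
      refine contCone_nonpos q ?_ w hw
      rintro v' ⟨t, ht, hmem⟩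
      have h1 := hqN _ hmem
      rw [add_sub_cancel_left, map_smul, smul_eq_mul] at h1
      nlinarith
    have hqb : q b ≤ η₂ := by
      have h1 := q.le_opNorm b
      have hb' : ‖b‖ ≤ η₂ := by rwa [mem_closedBall_zero_iff] at hb
      calc q b ≤ ‖q‖ * ‖b‖ := le_trans (le_abs_self _) h1
        _ ≤ 1 * η₂ := mul_le_mul hqB hb' (norm_nonneg _) zero_le_one
        _ = η₂ := one_mul _
    rw [← hwb]
    rw [map_add]
    linarith
  -- conclude
  have hfin : f' u ≤ τ * (η₁ + η₂) := by
    rw [← hfs, ContinuousLinearMap.smul_apply, smul_eq_mul, ← hpq,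
      ContinuousLinearMap.add_apply]
    exact mul_le_mul_of_nonneg_left (add_le_add hpu hqu) hτ.le
  linarith
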